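/- arXiv:1308.6539 — 2 statements merged into one kernel-verified Lean document; each statement's English description precedes it below -/
import Mathlib

section
/- Under the same hypotheses, there exists C₄ > 0 such that for all x ∈ M and y, z ∈ W^s_ε(x), the stable holonomy satisfies ‖H^{s,A}_{yz} − Id‖ ≤ C₄ d(y,z). -/
open Filter Topology Metric Matrix
open scoped Matrix.Norms.L2Operator
noncomputable section

def cocycle {M G : Type*} [Group G] (f : M → M) (A : M → G) : ℕ → M → G
  | 0, _ => 1
  | n + 1, x => A (f^[n] x) * cocycle f A n x

def zcocycle {M G : Type*} [Group G] (f : M ≃ M) (A : M → G) : ℤ → M → G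
  | Int.ofNat m, x => cocycle (⇑f) A m x
  | Int.negSucc m, x => (cocycle (⇑f) A (m + 1) ((⇑f.symm)^[m + 1] x))⁻¹

def zit {M : Type*} (f : M ≃ M) : ℤ → M → M
  | Int.ofNat m, x => (⇑f)^[m] x
  | Int.negSucc m, x => (⇑f.symm)^[m + 1] x

def gnorm {d : ℕ} (g : GL (Fin d) ℝ) : ℝ := ‖(g : Matrix (Fin d) (Fin d) ℝ)‖

def stableSet {M : Type*} [PseudoMetricSpace M] (f : M → M) (x : M) : Set M :=
  {y | Tendsto (fun n : ℕ => dist (f^[n] x) (f^[n] y)) atTop (𝓝 0)}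

def localStable {M : Type*} [PseudoMetricSpace M] (f : M → M) (ε : ℝ) (x : M) : Set M :=
  {y | ∀ n : ℕ, dist (f^[n] x) (f^[n] y) ≤ ε}

structure IsHyperbolic {M : Type*} [MetricSpace M] (f : M ≃ M) (C₁ lam ε τ : ℝ) : Prop where
  cont : Continuous f
  cont_symm : Continuous f.symm
  C₁_pos : 0 < C₁
  lam_pos : 0 < lam
  eps_pos : 0 < ε
  tau_pos : 0 < τ
  stable_contr : ∀ x y z, y ∈ localStable (⇑f) ε x → z ∈ localStable (⇑f) ε x →
    ∀ n : ℕ, dist ((⇑f)^[n] y) ((⇑f)^[n] z) ≤ C₁ * Real.exp (-lam * n) * dist y z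
  unstable_contr : ∀ x y z, y ∈ localStable (⇑f.symm) ε x → z ∈ localStable (⇑f.symm) ε x →
    ∀ n : ℕ, dist ((⇑f.symm)^[n] y) ((⇑f.symm)^[n] z) ≤ C₁ * Real.exp (-lam * n) * dist y z
  bracket : ∃ br : M → M → M,
    ContinuousOn (fun p : M × M => br p.1 p.2) {p | dist p.1 p.2 < τ} ∧
    ∀ x y, dist x y < τ → localStable (⇑f) ε x ∩ localStable (⇑f.symm) ε y = {br x y}

def FiberBunched {M : Type*} {d : ℕ} (f : M → M) (A : M → GL (Fin d) ℝ) (θ : ℝ) : Prop :=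
  ∃ C₃ > (0 : ℝ), ∀ (x : M) (n : ℕ),
    gnorm (cocycle f A n x) * gnorm ((cocycle f A n x)⁻¹) ≤ C₃ * Real.exp (θ * n)

/-! The approximants `Pₙ = (Aⁿ z)⁻¹ Aⁿ y` of the holonomy satisfy
`Pₙ₊₁ - Pₙ = (Aⁿ z)⁻¹ A(fⁿ z)⁻¹ (A(fⁿ y) - A(fⁿ z)) Aⁿ z Pₙ`. Fiber bunching bounds
`‖Aⁿ z‖ ‖(Aⁿ z)⁻¹‖` by `e^{θn}`, and the Lipschitz property of `A` together with the stable
contraction bounds `‖A(fⁿ y) - A(fⁿ z)‖` by `e^{-λn} d(y,z)`, so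
`‖Pₙ₊₁ - Pₙ‖ ≤ c e^{(θ-λ)n} d(y,z) ‖Pₙ‖`. As `θ < λ`, this keeps `‖Pₙ‖` uniformly bounded, and
summing the increments gives `‖H - 1‖ ≤ C d(y,z)`. -/

theorem norm_le_mul_exp_sum_of_norm_sub_le {E : Type*} [SeminormedAddCommGroup E] {u : ℕ → E}
    {a : ℕ → ℝ} (h : ∀ k, ‖u (k + 1) - u k‖ ≤ a k * ‖u k‖) (n : ℕ) :
    ‖u n‖ ≤ ‖u 0‖ * Real.exp (∑ k ∈ Finset.range n, a k) := by
  induction n with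
  | zero => simp
  | succ n ih =>
    calc ‖u (n + 1)‖ ≤ ‖u n‖ + ‖u (n + 1) - u n‖ := norm_le_insert' _ _
      _ ≤ ‖u n‖ * Real.exp (a n) := by
          nlinarith [h n, Real.add_one_le_exp (a n), norm_nonneg (u n)]
      _ ≤ ‖u 0‖ * Real.exp (∑ k ∈ Finset.range n, a k) * Real.exp (a n) := by gcongr
      _ = ‖u 0‖ * Real.exp (∑ k ∈ Finset.range (n + 1), a k) := by
          rw [Finset.sum_range_succ, Real.exp_add, mul_assoc]

theorem Units.norm_inv_mul_mul_sub_inv_mul_le {R : Type*} [NormedRing R] (a b g h : Rˣ) :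
    ‖(↑((b * h)⁻¹ * (a * g)) : R) - ↑(h⁻¹ * g)‖ ≤
      ‖(h : R)‖ * ‖(↑h⁻¹ : R)‖ * (‖(↑b⁻¹ : R)‖ * ‖(a : R) - b‖) * ‖(↑(h⁻¹ * g) : R)‖ := by
  have key : (↑((b * h)⁻¹ * (a * g)) : R) - ↑(h⁻¹ * g) =
      ↑h⁻¹ * (↑b⁻¹ * ((a : R) - b)) * h * ↑(h⁻¹ * g) := by
    simp only [_root_.mul_inv_rev, Units.val_mul, mul_sub, sub_mul, mul_assoc,
      Units.mul_inv_cancel_left, Units.inv_mul_cancel_left]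
  rw [key]
  calc _ ≤ ‖(↑h⁻¹ : R)‖ * ‖(↑b⁻¹ : R) * ((a : R) - b)‖ * ‖(h : R)‖ * ‖(↑(h⁻¹ * g) : R)‖ :=
        (norm_mul_le _ _).trans (by gcongr; exact norm_mul₃_le)
    _ ≤ ‖(↑h⁻¹ : R)‖ * (‖(↑b⁻¹ : R)‖ * ‖(a : R) - b‖) * ‖(h : R)‖ * ‖(↑(h⁻¹ * g) : R)‖ := by
        gcongr; exact norm_mul_le _ _
    _ = _ := by ring

theorem exists_forall_norm_units_inv_le {M R : Type*} [TopologicalSpace M] [CompactSpace M]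
    [NormedRing R] [CompleteSpace R] {A : M → Rˣ} (hA : Continuous fun x => (A x : R)) :
    ∃ B, ∀ x, ‖(↑(A x)⁻¹ : R)‖ ≤ B := by
  have hinv : Continuous fun x => Ring.inverse (A x : R) :=
    continuous_iff_continuousAt.2 fun x =>
      (NormedRing.inverse_continuousAt (A x)).comp_of_eq hA.continuousAt rfl
  simp only [Ring.inverse_unit] at hinv
  obtain ⟨B, hB⟩ := isCompact_univ.exists_bound_of_continuousOn hinv.continuousOn
  exact ⟨B, fun x => hB x (Set.mem_univ x)⟩

section Holonomy

variable {M R : Type*} [NormedRing R] {f : M → M} {A : M → Rˣ}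

variable (f A) in
def holonomyApprox (n : ℕ) (y z : M) : R := ↑((cocycle f A n z)⁻¹ * cocycle f A n y)

theorem holonomyApprox_zero (y z : M) : holonomyApprox f A 0 y z = 1 := by
  simp [holonomyApprox, cocycle]

variable [MetricSpace M]

theorem norm_holonomyApprox_succ_sub_le {K : NNReal} {B C₁ C₃ lam θ : ℝ} {y z : M}
    (hA : LipschitzWith K fun x => (A x : R)) (hB : ∀ x, ‖(↑(A x)⁻¹ : R)‖ ≤ B)
    (hFB : ∀ x (n : ℕ),
      ‖((cocycle f A n x : Rˣ) : R)‖ * ‖(↑(cocycle f A n x)⁻¹ : R)‖ ≤ C₃ * Real.exp (θ * n))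
    (hcontr : ∀ n : ℕ, dist (f^[n] y) (f^[n] z) ≤ C₁ * Real.exp (-lam * n) * dist y z)
    (n : ℕ) :
    ‖holonomyApprox f A (n + 1) y z - holonomyApprox f A n y z‖ ≤
      C₃ * B * K * C₁ * dist y z * Real.exp (θ - lam) ^ n * ‖holonomyApprox f A n y z‖ := by
  have hC₃ : 0 ≤ C₃ * Real.exp (θ * n) :=
    (mul_nonneg (norm_nonneg _) (norm_nonneg _)).trans (hFB z n)
  have hB0 : 0 ≤ B := (norm_nonneg _).trans (hB y)
  have hexp : Real.exp (θ * n) * Real.exp (-lam * n) = Real.exp (θ - lam) ^ n := by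
    rw [← Real.exp_add, ← Real.exp_nat_mul]
    ring_nf
  calc _ ≤ ‖((cocycle f A n z : Rˣ) : R)‖ * ‖(↑(cocycle f A n z)⁻¹ : R)‖ *
          (‖(↑(A (f^[n] z))⁻¹ : R)‖ * ‖(A (f^[n] y) : R) - A (f^[n] z)‖) *
          ‖holonomyApprox f A n y z‖ :=
        Units.norm_inv_mul_mul_sub_inv_mul_le (A (f^[n] y)) (A (f^[n] z))
          (cocycle f A n y) (cocycle f A n z)
    _ ≤ C₃ * Real.exp (θ * n) * (B * (K * (C₁ * Real.exp (-lam * n) * dist y z))) *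
          ‖holonomyApprox f A n y z‖ := by
        gcongr ?_ * (?_ * ?_) * _
        · exact hFB z n
        · exact hB _
        · rw [← dist_eq_norm]
          exact (hA.dist_le_mul _ _).trans (by gcongr; exact hcontr n)
    _ = _ := by rw [← hexp]; ring

theorem exists_norm_sub_one_le_of_tendsto_holonomyApprox {K : NNReal} {B C₁ C₃ lam θ : ℝ}
    (hA : LipschitzWith K fun x => (A x : R)) (hB : ∀ x, ‖(↑(A x)⁻¹ : R)‖ ≤ B)
    (hFB : ∀ x (n : ℕ),
      ‖((cocycle f A n x : Rˣ) : R)‖ * ‖(↑(cocycle f A n x)⁻¹ : R)‖ ≤ C₃ * Real.exp (θ * n))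
    (hC₁ : 0 ≤ C₁) (hθ : θ < lam) (δ : ℝ) :
    ∃ C, ∀ (y z : M) (L : R),
      (∀ n : ℕ, dist (f^[n] y) (f^[n] z) ≤ C₁ * Real.exp (-lam * n) * dist y z) →
      dist y z ≤ δ → Tendsto (fun n => holonomyApprox f A n y z) atTop (𝓝 L) →
      ‖L - 1‖ ≤ C * dist y z := by
  set r := Real.exp (θ - lam)
  have hr0 : 0 ≤ r := (Real.exp_pos _).le
  have hr1 : r < 1 := Real.exp_lt_one_iff.2 (sub_neg.2 hθ)
  have h1r : 0 < 1 - r := sub_pos.2 hr1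
  set c := C₃ * B * K * C₁
  set E := ‖(1 : R)‖ * Real.exp (c * δ / (1 - r))
  refine ⟨c * E / (1 - r), fun y z L hcontr hyz hL => ?_⟩
  have hc : 0 ≤ c := by
    have hC₃ : 0 ≤ C₃ := by
      simpa using (mul_nonneg (norm_nonneg _) (norm_nonneg _)).trans (hFB y 0)
    have hB0 : 0 ≤ B := (norm_nonneg _).trans (hB y)
    positivity
  set P := fun n => holonomyApprox f A n y z
  have hP0 : P 0 = 1 := holonomyApprox_zero y z
  have hstep := norm_holonomyApprox_succ_sub_le hA hB hFB hcontr
  have hPE : ∀ n, ‖P n‖ ≤ E := fun n => calc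
    ‖P n‖ ≤ ‖P 0‖ * Real.exp (∑ k ∈ Finset.range n, c * dist y z * r ^ k) :=
      norm_le_mul_exp_sum_of_norm_sub_le hstep n
    _ ≤ ‖(1 : R)‖ * Real.exp (c * δ / (1 - r)) := by
      rw [hP0]
      gcongr
      calc _ ≤ c * dist y z * (1 - r)⁻¹ :=
            sum_le_hasSum _ (fun k _ => by positivity)
              ((hasSum_geometric_of_lt_one hr0 hr1).mul_left _)
        _ ≤ c * δ / (1 - r) := by rw [div_eq_mul_inv]; gcongr
  have hgeom : ∀ n, dist (P n) (P (n + 1)) ≤ c * dist y z * E * r ^ n := fun n => by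
    rw [dist_comm, dist_eq_norm]
    calc _ ≤ c * dist y z * r ^ n * ‖P n‖ := hstep n
      _ ≤ c * dist y z * r ^ n * E := by gcongr; exact hPE n
      _ = _ := by ring
  calc ‖L - 1‖ = dist (P 0) L := by rw [dist_comm, dist_eq_norm, hP0]
    _ ≤ c * dist y z * E / (1 - r) := dist_le_of_le_geometric_of_tendsto₀ _ _ hr1 hgeom hL
    _ = c * E / (1 - r) * dist y z := by ring

end Holonomy

theorem stmt3_general {M : Type*} [MetricSpace M] [CompactSpace M] {d : ℕ}
    (f : M ≃ M) (C₁ lam ε τ : ℝ) (hf : IsHyperbolic f C₁ lam ε τ)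
    (A : M → GL (Fin d) ℝ)
    (hA : ∃ K : NNReal, LipschitzWith K fun x => (A x : Matrix (Fin d) (Fin d) ℝ))
    (θ : ℝ) (hθ : θ < lam) (hFB : FiberBunched (⇑f) A θ)
    (H : M → M → GL (Fin d) ℝ)
    (hH : ∀ x : M, ∀ y ∈ localStable (⇑f) ε x, ∀ z ∈ localStable (⇑f) ε x,
      Tendsto (fun n : ℕ =>
          ((((cocycle (⇑f) A n z)⁻¹ * cocycle (⇑f) A n y : GL (Fin d) ℝ)) :
            Matrix (Fin d) (Fin d) ℝ))
        atTop (𝓝 (H y z : Matrix (Fin d) (Fin d) ℝ))) :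
    ∃ C₄ > (0 : ℝ), ∀ x : M, ∀ y ∈ localStable (⇑f) ε x, ∀ z ∈ localStable (⇑f) ε x,
      ‖(H y z : Matrix (Fin d) (Fin d) ℝ) - 1‖ ≤ C₄ * dist y z := by
  obtain ⟨K, hK⟩ := hA
  obtain ⟨C₃, -, hFB⟩ := hFB
  obtain ⟨B, hB⟩ := exists_forall_norm_units_inv_le hK.continuous
  obtain ⟨C, hC⟩ :=
    exists_norm_sub_one_le_of_tendsto_holonomyApprox hK hB hFB hf.C₁_pos.le hθ (2 * ε)
  refine ⟨max C 1, by positivity, fun x y hy z hz => ?_⟩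
  have hyz : dist y z ≤ 2 * ε :=
    ((dist_triangle_left y z x).trans (add_le_add (hy 0) (hz 0))).trans_eq (two_mul ε).symm
  calc _ ≤ C * dist y z := hC y z _ (hf.stable_contr x y z hy hz) hyz (hH x y hy z hz)
    _ ≤ max C 1 * dist y z := by gcongr; exact le_max_left _ _

/-- there is `C₄ > 0` such that for `y, z` in a common local stable set of size
`ε`, the stable holonomy satisfies `‖H^{s,A}_{yz} − Id‖ ≤ C₄ d(y,z)`. -/
theorem stmt3 {M : Type*} [MetricSpace M] [CompactSpace M] {d : ℕ}
    (f : M ≃ M) (C₁ lam ε τ : ℝ) (hf : IsHyperbolic f C₁ lam ε τ)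
    (A : M → GL (Fin d) ℝ)
    (hA : ∃ K : NNReal, LipschitzWith K fun x => (A x : Matrix (Fin d) (Fin d) ℝ))
    (θ : ℝ) (hθ0 : 0 < θ) (hθ : θ < lam) (hFB : FiberBunched (⇑f) A θ)
    (H : M → M → GL (Fin d) ℝ)
    (hH : ∀ x : M, ∀ y ∈ localStable (⇑f) ε x, ∀ z ∈ localStable (⇑f) ε x,
      Tendsto (fun n : ℕ =>
          ((((cocycle (⇑f) A n z)⁻¹ * cocycle (⇑f) A n y : GL (Fin d) ℝ)) :
            Matrix (Fin d) (Fin d) ℝ))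
        atTop (𝓝 (H y z : Matrix (Fin d) (Fin d) ℝ))) :
    ∃ C₄ > (0 : ℝ), ∀ x : M, ∀ y ∈ localStable (⇑f) ε x, ∀ z ∈ localStable (⇑f) ε x,
      ‖(H y z : Matrix (Fin d) (Fin d) ℝ) - 1‖ ≤ C₄ * dist y z :=
  stmt3_general f C₁ lam ε τ hf A hA θ hθ hFB H hH
end
end

section
/- Let f be a hyperbolic homeomorphism with fixed point x, A and B Lipschitz fiber bunched cocycles with equal periodic data (Aⁿ(p) = Bⁿ(p) whenever fⁿ(p) = p). Then for every y ∈ W^s(x) ∩ W^u(x), the stable and unstable holonomy expressions agree: H^{s,A}_{xy} H^{s,B}_{yx} = H^{u,A}_{xy} H^{u,B}_{yx}. -/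
open Filter Topology Metric Matrix
open scoped Matrix.Norms.L2Operator
noncomputable section

/-!
Let `z = f⁻ⁿ y`. Since `y` is homoclinic to the fixed point `x`, both ends of the orbit segment
`z, …, f²ⁿ z = fⁿ y` are `e^{-λn}`-close to `x`, so the closing lemma gives a point `p` of period
`2n` whose orbit shadows the segment, with errors decaying towards the middle faster than the
fiber-bunching rate `e^{θj}`. Along such shadowing orbits the cocycles become asymptotically
equal, so with `q = f⁻ⁿ p`
  `Aⁿ(y)⁻¹ Bⁿ(y) ≈ Aⁿ(q)⁻¹ Bⁿ(q) = Aⁿ(p) Bⁿ(p)⁻¹ ≈ Aⁿ(z) Bⁿ(z)⁻¹`,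
the middle equality being `A²ⁿ(p) = B²ⁿ(p)`. Since `Aⁿ(x) = Bⁿ(x)`, the left side tends to
`H^{s,A}_{xy} H^{s,B}_{yx}` and the right side to `H^{u,A}_{xy} H^{u,B}_{yx}`.
-/

section Iterate
variable {M : Type*}

theorem iterate_symm_iterate (f : M ≃ M) (n : ℕ) (w : M) :
    (⇑f.symm)^[n] ((⇑f)^[n] w) = w :=
  Function.LeftInverse.iterate f.symm_apply_apply n w

theorem iterate_iterate_symm (f : M ≃ M) (n : ℕ) (w : M) :
    (⇑f)^[n] ((⇑f.symm)^[n] w) = w :=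
  Function.LeftInverse.iterate f.apply_symm_apply n w

theorem iterate_symm_iterate_of_le (f : M ≃ M) {j m : ℕ} (h : j ≤ m) (w : M) :
    (⇑f.symm)^[j] ((⇑f)^[m] w) = (⇑f)^[m - j] w := by
  conv_lhs => rw [← Nat.add_sub_cancel' h, Function.iterate_add_apply, iterate_symm_iterate]

end Iterate

section Cocycle
variable {M G : Type*} [Group G]

theorem cocycle_add (f : M → M) (A : M → G) (m n : ℕ) (x : M) :
    cocycle f A (m + n) x = cocycle f A n (f^[m] x) * cocycle f A m x := by
  induction n with
  | zero => simp [cocycle]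
  | succ n ih =>
    rw [← add_assoc, cocycle, ih, cocycle, ← Function.iterate_add_apply, add_comm n m, mul_assoc]

theorem cocycle_succ' (f : M → M) (A : M → G) (n : ℕ) (x : M) :
    cocycle f A (n + 1) x = cocycle f A n (f x) * A x := by
  rw [add_comm, cocycle_add]
  simp [cocycle]

def symmGenerator (f : M ≃ M) (A : M → G) : M → G := fun w => (A (f.symm w))⁻¹

theorem cocycle_symm_symmGenerator (f : M ≃ M) (A : M → G) (n : ℕ) (x : M) :
    cocycle f.symm (symmGenerator f A) n x = (cocycle f A n ((⇑f.symm)^[n] x))⁻¹ := by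
  induction n with
  | zero => simp [cocycle]
  | succ n ih =>
    rw [cocycle, ih, cocycle_succ', Function.iterate_succ_apply', f.apply_symm_apply,
      _root_.mul_inv_rev]
    rfl

theorem zcocycle_neg_natCast (f : M ≃ M) (A : M → G) (n : ℕ) (x : M) :
    zcocycle f A (-(n : ℤ)) x = cocycle f.symm (symmGenerator f A) n x := by
  rw [cocycle_symm_symmGenerator]
  cases n with
  | zero => simp [zcocycle, cocycle]
  | succ m => rfl

theorem cocycle_inv_mul_eq_mul_inv_of_periodic (f : M ≃ M) {A B : M → G} {n : ℕ} {p : M}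
    (hp : (⇑f)^[n + n] p = p) (hAB : cocycle f A (n + n) p = cocycle f B (n + n) p) :
    (cocycle f A n ((⇑f.symm)^[n] p))⁻¹ * cocycle f B n ((⇑f.symm)^[n] p) =
      cocycle f A n p * (cocycle f B n p)⁻¹ := by
  have hq : (⇑f.symm)^[n] p = (⇑f)^[n] p := by
    conv_lhs => rw [← hp]
    rw [iterate_symm_iterate_of_le f (by omega), Nat.add_sub_cancel]
  rw [cocycle_add, cocycle_add] at hAB
  rw [hq, inv_mul_eq_iff_eq_mul, ← mul_assoc, hAB]
  group

end Cocycle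

theorem FiberBunched.symmGenerator {M : Type*} {d : ℕ} {f : M ≃ M} {A : M → GL (Fin d) ℝ}
    {θ : ℝ} (hA : FiberBunched f A θ) : FiberBunched f.symm (symmGenerator f A) θ := by
  obtain ⟨C₃, hC₃, hA⟩ := hA
  refine ⟨C₃, hC₃, fun x n => ?_⟩
  rw [cocycle_symm_symmGenerator, inv_inv, mul_comm]
  exact hA _ n

section NormedRing
variable {R : Type*} [NormedRing R]

theorem Units.norm_inv_mul_sub_one_le (a b : Rˣ) :
    ‖((a⁻¹ * b : Rˣ) : R) - 1‖ ≤ ‖((a⁻¹ : Rˣ) : R)‖ * ‖(b : R) - a‖ := by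
  rw [Units.val_mul, ← Units.inv_mul a, ← mul_sub]
  exact norm_mul_le _ _

theorem Units.norm_mul_inv_sub_one_le (a b : Rˣ) :
    ‖((a * b⁻¹ : Rˣ) : R) - 1‖ ≤ ‖(a : R) - b‖ * ‖((b⁻¹ : Rˣ) : R)‖ := by
  rw [Units.val_mul, ← Units.mul_inv b, ← sub_mul]
  exact norm_mul_le _ _

theorem Units.norm_conj_sub_one_le (g X : Rˣ) :
    ‖((g * X * g⁻¹ : Rˣ) : R) - 1‖ ≤ ‖(g : R)‖ * ‖((g⁻¹ : Rˣ) : R)‖ * ‖(X : R) - 1‖ := by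
  have h : ((g * X * g⁻¹ : Rˣ) : R) - 1 = g * ((X : R) - 1) * ((g⁻¹ : Rˣ) : R) := by
    simp [mul_sub, sub_mul]
  rw [h, mul_right_comm ‖(g : R)‖]
  exact (norm_mul_le _ _).trans (mul_le_mul_of_nonneg_right (norm_mul_le _ _) (norm_nonneg _))

theorem Units.tendsto_of_tendsto_val [HasSummableGeomSeries R] {ι : Type*} {l : Filter ι}
    {u : ι → Rˣ} {a : Rˣ} (h : Tendsto (fun i => (u i : R)) l (𝓝 a)) : Tendsto u l (𝓝 a) :=
  Units.isOpenEmbedding_val.tendsto_nhds_iff.2 h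

theorem exists_norm_inv_le [HasSummableGeomSeries R] {M : Type*} [TopologicalSpace M]
    [CompactSpace M] {G : M → Rˣ} (hG : Continuous fun w => (G w : R)) :
    ∃ J, ∀ w, ‖(((G w)⁻¹ : Rˣ) : R)‖ ≤ J := by
  have hG' : Continuous G := Units.isOpenEmbedding_val.isEmbedding.continuous_iff.2 hG
  obtain ⟨J, hJ⟩ :=
    isCompact_univ.exists_bound_of_continuousOn (Units.continuous_coe_inv.comp hG').continuousOn
  exact ⟨J, fun w => hJ w trivial⟩

end NormedRing

section Perturbation
variable {M R : Type*} [NormedRing R]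

theorem norm_cocycle_inv_mul_sub_one_le [NormOneClass R] (g : M → M) (G : M → Rˣ) (u v : M)
    (n : ℕ) :
    ‖((cocycle g G n v)⁻¹ * cocycle g G n u : Rˣ) - (1 : R)‖ ≤
      ∏ j ∈ Finset.range n, (1 + ‖((cocycle g G j v : Rˣ) : R)‖ *
        ‖(((cocycle g G j v)⁻¹ : Rˣ) : R)‖ * ‖(((G (g^[j] v))⁻¹ * G (g^[j] u) : Rˣ) : R) - 1‖) -
        1 := by
  induction n with
  | zero => simp [cocycle]
  | succ n ih =>
    set P := cocycle g G n v
    set D := P⁻¹ * cocycle g G n u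
    set X := (G (g^[n] v))⁻¹ * G (g^[n] u)
    set a := ‖(P : R)‖ * ‖((P⁻¹ : Rˣ) : R)‖ * ‖(X : R) - 1‖
    have hstep : (cocycle g G (n + 1) v)⁻¹ * cocycle g G (n + 1) u = P⁻¹ * X * P⁻¹⁻¹ * D := by
      simp only [cocycle, P, D, X]
      group
    have hconj : ‖((P⁻¹ * X * P⁻¹⁻¹ : Rˣ) : R) - 1‖ ≤ a := by
      refine (Units.norm_conj_sub_one_le _ _).trans_eq ?_
      rw [inv_inv, mul_comm ‖((P⁻¹ : Rˣ) : R)‖]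
    have hsplit : ((P⁻¹ * X * P⁻¹⁻¹ * D : Rˣ) : R) - 1 =
        (((P⁻¹ * X * P⁻¹⁻¹ : Rˣ) : R) - 1) * ((D : R) - 1) + (((P⁻¹ * X * P⁻¹⁻¹ : Rˣ) : R) - 1)
          + ((D : R) - 1) := by
      rw [Units.val_mul]
      noncomm_ring
    have ha : 0 ≤ a := by positivity
    rw [Finset.prod_range_succ, hstep, hsplit]
    calc _ ≤ a * ‖(D : R) - 1‖ + a + ‖(D : R) - 1‖ := by
          refine (norm_add₃_le).trans ?_
          gcongr
          exact (norm_mul_le _ _).trans (by gcongr)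
      _ ≤ _ := by nlinarith [mul_le_mul_of_nonneg_left ih (by linarith : 0 ≤ 1 + a)]

theorem prod_one_add_sub_one_le_two_mul {ι : Type*} (s : Finset ι) {a : ι → ℝ} {t : ℝ}
    (ha : ∀ i, 0 ≤ a i) (hs : ∑ i ∈ s, a i ≤ t) (ht : t ≤ 1) :
    ∏ i ∈ s, (1 + a i) - 1 ≤ 2 * t := by
  have ht0 : 0 ≤ t := (Finset.sum_nonneg fun i _ => ha i).trans hs
  have hexp : Real.exp t - 1 ≤ 2 * t := by
    simpa [abs_of_nonneg ht0] using (le_abs_self _).trans (Real.abs_exp_sub_one_le (x := t)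
      (by rwa [abs_of_nonneg ht0]))
  linarith [Real.prod_one_add_le_exp_sum s (fun i => ha i), Real.exp_le_exp.2 hs]

end Perturbation

theorem tendsto_exp_mul_mul_exp_neg_mul {θ lam : ℝ} (hθ : θ < lam) (c : ℝ) :
    Tendsto (fun n : ℕ => Real.exp (θ * n) * (c * Real.exp (-lam * n))) atTop (𝓝 0) := by
  have h : Tendsto (fun n : ℕ => c * Real.exp ((θ - lam) * n)) atTop (𝓝 (c * 0)) :=
    (Real.tendsto_exp_atBot.comp (tendsto_natCast_atTop_atTop.const_mul_atTop_of_neg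
      (sub_neg.2 hθ))).const_mul c
  rw [mul_zero] at h
  refine h.congr fun n => ?_
  rw [mul_left_comm, ← Real.exp_add]
  ring_nf

section Shadowing
variable {M R : Type*} [NormedRing R] [NormOneClass R] {g : M → M} {G : M → Rˣ} {C₃ θ δ : ℝ}

theorem sum_bunching_mul_norm_sub_one_le {u v : M} {n : ℕ} {b : ℝ} (hδ : 0 < δ) (hb : 0 ≤ b)
    (hbunch : ∀ w j, ‖((cocycle g G j w : Rˣ) : R)‖ * ‖(((cocycle g G j w)⁻¹ : Rˣ) : R)‖ ≤
      C₃ * Real.exp (θ * j))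
    (hstep : ∀ j < n,
      ‖(((G (g^[j] v))⁻¹ * G (g^[j] u) : Rˣ) : R) - 1‖ ≤ b * Real.exp (-(θ + δ) * j)) :
    ∑ j ∈ Finset.range n, ‖((cocycle g G j v : Rˣ) : R)‖ * ‖(((cocycle g G j v)⁻¹ : Rˣ) : R)‖ *
      ‖(((G (g^[j] v))⁻¹ * G (g^[j] u) : Rˣ) : R) - 1‖ ≤
      C₃ * b * (1 - Real.exp (-δ))⁻¹ := by
  have hC₃ : 0 ≤ C₃ := by
    have h := hbunch v 0
    simp only [cocycle, inv_one, Units.val_one, norm_one, mul_one, CharP.cast_eq_zero, mul_zero,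
      Real.exp_zero] at h
    linarith
  calc _ ≤ ∑ j ∈ Finset.range n, C₃ * b * Real.exp (-δ) ^ j := by
        refine Finset.sum_le_sum fun j hj => ?_
        have hexp : Real.exp (-δ) ^ j = Real.exp (θ * j) * Real.exp (-(θ + δ) * j) := by
          rw [← Real.exp_nat_mul, ← Real.exp_add]
          ring_nf
        rw [hexp]
        calc _ ≤ C₃ * Real.exp (θ * j) * (b * Real.exp (-(θ + δ) * j)) :=
              mul_le_mul (hbunch _ _) (hstep j (Finset.mem_range.1 hj)) (norm_nonneg _)
                (by positivity)
          _ = _ := by ring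
    _ = C₃ * b * ∑ j ∈ Finset.range n, Real.exp (-δ) ^ j := by rw [Finset.mul_sum]
    _ ≤ C₃ * b * (1 - Real.exp (-δ))⁻¹ := by
        have h := geom_sum_Ico_le_of_lt_one (m := 0) (n := n) (Real.exp_pos (-δ)).le
          (Real.exp_lt_one_iff.2 (neg_lt_zero.2 hδ))
        rw [← Finset.range_eq_Ico, pow_zero, one_div] at h
        gcongr

theorem norm_cocycle_mul_inv_sub_one_le {u v : M} {n : ℕ} {b : ℝ} (hδ : 0 < δ) (hb : 0 ≤ b)
    (hbunch : ∀ w j, ‖((cocycle g G j w : Rˣ) : R)‖ * ‖(((cocycle g G j w)⁻¹ : Rˣ) : R)‖ ≤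
      C₃ * Real.exp (θ * j))
    (hstep : ∀ j < n,
      ‖(((G (g^[j] v))⁻¹ * G (g^[j] u) : Rˣ) : R) - 1‖ ≤ b * Real.exp (-(θ + δ) * j))
    (hsmall : C₃ * b * (1 - Real.exp (-δ))⁻¹ ≤ 1) :
    ‖((cocycle g G n u * (cocycle g G n v)⁻¹ : Rˣ) : R) - 1‖ ≤
      2 * C₃ * C₃ * (1 - Real.exp (-δ))⁻¹ * (Real.exp (θ * n) * b) := by
  set P := cocycle g G n v
  have hconj : cocycle g G n u * P⁻¹ = P * (P⁻¹ * cocycle g G n u) * P⁻¹ := by group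
  have hprod := (norm_cocycle_inv_mul_sub_one_le g G u v n).trans
    (prod_one_add_sub_one_le_two_mul _ (fun j => by positivity)
      (sum_bunching_mul_norm_sub_one_le hδ hb hbunch hstep) hsmall)
  calc _ ≤ ‖(P : R)‖ * ‖((P⁻¹ : Rˣ) : R)‖ * ‖((P⁻¹ * cocycle g G n u : Rˣ) : R) - 1‖ := by
        rw [hconj]
        exact Units.norm_conj_sub_one_le _ _
    _ ≤ C₃ * Real.exp (θ * n) * (2 * (C₃ * b * (1 - Real.exp (-δ))⁻¹)) :=
        mul_le_mul (hbunch _ _) hprod (norm_nonneg _)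
          ((mul_nonneg (norm_nonneg _) (norm_nonneg _)).trans (hbunch v n))
    _ = _ := by ring

theorem tendsto_cocycle_mul_inv_of_shadow [HasSummableGeomSeries R] {u v : ℕ → M} {b : ℕ → ℝ}
    (hθ : 0 ≤ θ) (hδ : 0 < δ) (hb0 : ∀ n, 0 ≤ b n)
    (hb : Tendsto (fun n : ℕ => Real.exp (θ * n) * b n) atTop (𝓝 0))
    (hbunch : ∀ w j, ‖((cocycle g G j w : Rˣ) : R)‖ * ‖(((cocycle g G j w)⁻¹ : Rˣ) : R)‖ ≤
      C₃ * Real.exp (θ * j))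
    (hstep : ∀ᶠ n in atTop, ∀ j < n,
      ‖(((G (g^[j] (v n)))⁻¹ * G (g^[j] (u n)) : Rˣ) : R) - 1‖ ≤ b n * Real.exp (-(θ + δ) * j)) :
    Tendsto (fun n => cocycle g G n (u n) * (cocycle g G n (v n))⁻¹) atTop (𝓝 1) := by
  apply Units.tendsto_of_tendsto_val
  rw [Units.val_one, ← tendsto_sub_nhds_zero_iff]
  have hb' : Tendsto b atTop (𝓝 0) := squeeze_zero hb0
    (fun n => le_mul_of_one_le_left (hb0 n) (Real.one_le_exp (by positivity))) hb
  have hsmall : ∀ᶠ n in atTop, C₃ * b n * (1 - Real.exp (-δ))⁻¹ < 1 := by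
    refine Tendsto.eventually_lt_const zero_lt_one ?_
    simpa using (hb'.const_mul C₃).mul_const (1 - Real.exp (-δ))⁻¹
  refine squeeze_zero_norm' ?_ (by simpa using hb.const_mul (2 * C₃ * C₃ * (1 - Real.exp (-δ))⁻¹))
  filter_upwards [hstep, hsmall] with n hstep hsmall
  exact norm_cocycle_mul_inv_sub_one_le hδ (hb0 n) hbunch hstep hsmall.le

end Shadowing

section Hyperbolic
variable {M : Type*} [MetricSpace M]

theorem mem_stableSet_self (g : M → M) (x : M) : x ∈ stableSet g x := by
  simp [stableSet]

theorem exists_dist_iterate_le_of_mem_stableSet {g : M → M} {C₁ lam ε : ℝ} (hε : 0 < ε)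
    (hcontr : ∀ x y z, y ∈ localStable g ε x → z ∈ localStable g ε x →
      ∀ n : ℕ, dist (g^[n] y) (g^[n] z) ≤ C₁ * Real.exp (-lam * n) * dist y z)
    {x y : M} (hx : g x = x) (hy : y ∈ stableSet g x) :
    ∃ C, ∀ᶠ n : ℕ in atTop, dist x (g^[n] y) ≤ C * Real.exp (-lam * n) := by
  have hfix : ∀ n, g^[n] x = x := fun n => Function.iterate_fixed hx n
  obtain ⟨N, hN⟩ := eventually_atTop.1 (hy.eventually (ge_mem_nhds hε))
  have hxN : g^[N] y ∈ localStable g ε x := fun m => by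
    rw [hfix, ← Function.iterate_add_apply, ← hfix (m + N)]
    exact hN _ le_add_self
  have hxx : x ∈ localStable g ε x := fun m => by simpa using hε.le
  refine ⟨C₁ * Real.exp (lam * N) * dist x (g^[N] y), eventually_atTop.2 ⟨N, fun n hn => ?_⟩⟩
  have h := hcontr x x _ hxx hxN (n - N)
  rw [hfix, ← Function.iterate_add_apply, Nat.sub_add_cancel hn, Nat.cast_sub hn] at h
  refine h.trans_eq ?_
  rw [show -lam * ((n : ℝ) - N) = lam * N + -lam * n by ring, Real.exp_add]
  ring

theorem IsHyperbolic.exists_dist_iterate_iterate_symm_le {f : M ≃ M} {C₁ lam ε τ : ℝ}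
    (hf : IsHyperbolic f C₁ lam ε τ) {x y : M} (hx : f x = x) (hys : y ∈ stableSet f x)
    (hyu : y ∈ stableSet f.symm x) :
    ∃ C, 0 ≤ C ∧ ∀ᶠ n : ℕ in atTop,
      dist ((⇑f)^[n] y) ((⇑f.symm)^[n] y) ≤ C * Real.exp (-lam * n) := by
  obtain ⟨Cs, hCs⟩ := exists_dist_iterate_le_of_mem_stableSet hf.eps_pos hf.stable_contr hx hys
  obtain ⟨Cu, hCu⟩ := exists_dist_iterate_le_of_mem_stableSet hf.eps_pos hf.unstable_contr
    (f.symm_apply_eq.2 hx.symm) hyu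
  have hC : ∀ᶠ n : ℕ in atTop,
      dist ((⇑f)^[n] y) ((⇑f.symm)^[n] y) ≤ (Cs + Cu) * Real.exp (-lam * n) :=
    (hCs.and hCu).mono fun n h => (dist_triangle_left _ _ x).trans (by linarith)
  obtain ⟨n, hn⟩ := hC.exists
  exact ⟨Cs + Cu, nonneg_of_mul_nonneg_left (dist_nonneg.trans hn) (Real.exp_pos _), hC⟩

variable {f : M ≃ M} {κ C₅ ε₀ : ℝ}
  (hclose : ∀ (z : M) (n : ℕ), dist ((⇑f)^[n] z) z < ε₀ → ∃ p : M, (⇑f)^[n] p = p ∧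
    ∀ j ≤ n, dist ((⇑f)^[j] z) ((⇑f)^[j] p) ≤
      C₅ * Real.exp (-κ * (↑(min j (n - j)) : ℝ)) * dist ((⇑f)^[n] z) z)
include hclose

theorem exists_periodic_shadow_of_closing {z : M} {n : ℕ} (hz : dist ((⇑f)^[n + n] z) z < ε₀) :
    ∃ p : M, (⇑f)^[n + n] p = p ∧
      (∀ j ≤ n, dist ((⇑f)^[j] z) ((⇑f)^[j] p) ≤
        C₅ * Real.exp (-κ * j) * dist ((⇑f)^[n + n] z) z) ∧
      ∀ j ≤ n, dist ((⇑f.symm)^[j] ((⇑f)^[n + n] z)) ((⇑f.symm)^[j] p) ≤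
        C₅ * Real.exp (-κ * j) * dist ((⇑f)^[n + n] z) z := by
  obtain ⟨p, hp, hshadow⟩ := hclose z (n + n) hz
  refine ⟨p, hp, fun j hj => ?_, fun j hj => ?_⟩
  · simpa [min_eq_left (by omega : j ≤ n + n - j)] using hshadow j (by omega)
  · have h := hshadow (n + n - j) (by omega)
    rw [min_eq_right (by omega), Nat.sub_sub_self (by omega)] at h
    conv_lhs => rw [← hp]
    rwa [iterate_symm_iterate_of_le f (by omega), iterate_symm_iterate_of_le f (by omega)]

theorem IsHyperbolic.exists_periodic_shadow_of_homoclinic {C₁ lam ε τ : ℝ}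
    (hf : IsHyperbolic f C₁ lam ε τ) (hC₅ : 0 ≤ C₅) (hε₀ : 0 < ε₀) {x y : M} (hx : f x = x)
    (hys : y ∈ stableSet f x) (hyu : y ∈ stableSet f.symm x) :
    ∃ K, 0 ≤ K ∧ ∀ᶠ n in atTop, ∃ p : M, (⇑f)^[n + n] p = p ∧
      (∀ j ≤ n, dist ((⇑f)^[j] ((⇑f.symm)^[n] y)) ((⇑f)^[j] p) ≤
        K * Real.exp (-lam * n) * Real.exp (-κ * j)) ∧
      ∀ j ≤ n, dist ((⇑f.symm)^[j] ((⇑f)^[n] y)) ((⇑f.symm)^[j] p) ≤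
        K * Real.exp (-lam * n) * Real.exp (-κ * j) := by
  obtain ⟨C, hC0, hC⟩ := hf.exists_dist_iterate_iterate_symm_le hx hys hyu
  have hsmall : ∀ᶠ n : ℕ in atTop, C * Real.exp (-lam * n) < ε₀ := by
    refine Tendsto.eventually_lt_const hε₀ ?_
    simpa using tendsto_exp_mul_mul_exp_neg_mul (θ := 0) hf.lam_pos C
  have hz : ∀ n, (⇑f)^[n + n] ((⇑f.symm)^[n] y) = (⇑f)^[n] y := fun n => by
    rw [Function.iterate_add_apply, iterate_iterate_symm]
  refine ⟨C₅ * C, mul_nonneg hC₅ hC0, ?_⟩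
  filter_upwards [hC, hsmall] with n hCn hsn
  obtain ⟨p, hp, hfwd, hbwd⟩ :=
    exists_periodic_shadow_of_closing hclose (z := (⇑f.symm)^[n] y) (by rw [hz]; linarith)
  rw [hz] at hfwd hbwd
  have hbound : ∀ j : ℕ, C₅ * Real.exp (-κ * j) * dist ((⇑f)^[n] y) ((⇑f.symm)^[n] y) ≤
      C₅ * C * Real.exp (-lam * n) * Real.exp (-κ * j) := fun j =>
    (mul_le_mul_of_nonneg_left hCn (by positivity)).trans_eq (by ring)
  exact ⟨p, hp, fun j hj => (hfwd j hj).trans (hbound j), fun j hj => (hbwd j hj).trans (hbound j)⟩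

end Hyperbolic

section Lipschitz
variable {M : Type*} [MetricSpace M] [CompactSpace M] {d : ℕ} [Nonempty (Fin d)]
  {A : M → GL (Fin d) ℝ} {L : NNReal} {θ lam κ K : ℝ}

theorem tendsto_cocycle_mul_inv_of_shadowing {g : M → M}
    (hA : LipschitzWith L fun w => (A w : Matrix (Fin d) (Fin d) ℝ)) (hF : FiberBunched g A θ)
    (hθ0 : 0 ≤ θ) (hθ : θ < lam) (hκ : θ < κ) (hK : 0 ≤ K) {u v : ℕ → M}
    (huv : ∀ᶠ n in atTop, ∀ j ≤ n,
      dist (g^[j] (u n)) (g^[j] (v n)) ≤ K * Real.exp (-lam * n) * Real.exp (-κ * j)) :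
    Tendsto (fun n => cocycle g A n (u n) * (cocycle g A n (v n))⁻¹) atTop (𝓝 1) := by
  obtain ⟨C₃, -, hF⟩ := hF
  obtain ⟨J, hJ⟩ := exists_norm_inv_le hA.continuous
  have hJ0 : 0 ≤ J := (norm_nonneg _).trans (hJ (u 0))
  refine tendsto_cocycle_mul_inv_of_shadow (δ := κ - θ)
    (b := fun n => J * L * K * Real.exp (-lam * n))
    hθ0 (sub_pos.2 hκ) (fun n => by positivity) (tendsto_exp_mul_mul_exp_neg_mul hθ _) hF ?_
  filter_upwards [huv] with n hn j hj
  rw [add_sub_cancel]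
  calc _ ≤ J * (L * (K * Real.exp (-lam * n) * Real.exp (-κ * j))) := by
        refine (Units.norm_inv_mul_sub_one_le _ _).trans
          (mul_le_mul (hJ _) ?_ (norm_nonneg _) hJ0)
        rw [← dist_eq_norm]
        exact (hA.dist_le_mul _ _).trans (by gcongr; exact hn j hj.le)
    _ = _ := by ring

theorem tendsto_inv_mul_cocycle_of_backward_shadowing (f : M ≃ M)
    (hA : LipschitzWith L fun w => (A w : Matrix (Fin d) (Fin d) ℝ)) (hF : FiberBunched f A θ)
    (hθ0 : 0 ≤ θ) (hθ : θ < lam) (hκ : θ < κ) (hK : 0 ≤ K) {u v : ℕ → M}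
    (huv : ∀ᶠ n in atTop, ∀ j ≤ n, dist ((⇑f.symm)^[j] (u n)) ((⇑f.symm)^[j] (v n)) ≤
      K * Real.exp (-lam * n) * Real.exp (-κ * j)) :
    Tendsto (fun n => (cocycle f A n ((⇑f.symm)^[n] (u n)))⁻¹ *
      cocycle f A n ((⇑f.symm)^[n] (v n))) atTop (𝓝 1) := by
  obtain ⟨C₃, -, hF⟩ := hF.symmGenerator
  obtain ⟨J, hJ⟩ := exists_norm_inv_le hA.continuous
  have h := tendsto_cocycle_mul_inv_of_shadow (g := f.symm) (u := u) (v := v) (δ := κ - θ)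
    (b := fun n => L * J * K * Real.exp (-κ) * Real.exp (-lam * n)) hθ0 (sub_pos.2 hκ)
    (fun n => by have := (norm_nonneg _).trans (hJ (u 0)); positivity)
    (tendsto_exp_mul_mul_exp_neg_mul hθ _) hF ?_
  · simpa only [cocycle_symm_symmGenerator, inv_inv] using h
  filter_upwards [huv] with n hn j hj
  -- the step of the backward cocycle at time `j` evaluates `A` at time `j + 1`
  rw [add_sub_cancel, symmGenerator, symmGenerator, inv_inv, ← Function.iterate_succ_apply' f.symm,
    ← Function.iterate_succ_apply' f.symm]
  calc _ ≤ L * (K * Real.exp (-lam * n) * Real.exp (-κ * ↑(j + 1))) * J := by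
        refine (Units.norm_mul_inv_sub_one_le _ _).trans
          (mul_le_mul ?_ (hJ _) (norm_nonneg _) (by positivity))
        rw [← dist_eq_norm, dist_comm]
        exact (hA.dist_le_mul _ _).trans (by gcongr; exact hn (j + 1) hj)
    _ = _ := by
        rw [Nat.cast_succ, show -κ * (j + 1) = -κ + -κ * j by ring, Real.exp_add]
        ring

end Lipschitz

theorem eq_of_tendsto_mul_mul_inv {G ι : Type*} [TopologicalSpace G] [Group G]
    [IsTopologicalGroup G] [T2Space G] {l : Filter ι} [l.NeBot] {a b c e Γ S U : ι → G}
    {s u : G} (hS : ∀ᶠ i in l, S i = a i * Γ i * (b i)⁻¹)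
    (hU : ∀ᶠ i in l, U i = c i * Γ i * (e i)⁻¹) (ha : Tendsto a l (𝓝 1))
    (hb : Tendsto b l (𝓝 1)) (hc : Tendsto c l (𝓝 1)) (he : Tendsto e l (𝓝 1))
    (hSs : Tendsto S l (𝓝 s)) (hUu : Tendsto U l (𝓝 u)) : s = u := by
  have hΓ : Tendsto Γ l (𝓝 s) := by
    have h := (ha.inv.mul hSs).mul hb
    rw [inv_one, one_mul, mul_one] at h
    exact h.congr' (hS.mono fun i h => by rw [h]; group)
  have h := (hc.mul hΓ).mul he.inv
  rw [inv_one, one_mul, mul_one] at h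
  exact tendsto_nhds_unique (h.congr' (hU.mono fun i h => h.symm)) hUu

theorem tendsto_inv_mul_cocycle_of_holonomy {M R : Type*} [NormedRing R]
    [HasSummableGeomSeries R] {g : M → M} {A B : M → Rˣ} {x y : M} {HA HB : Rˣ}
    (hx : ∀ n, cocycle g A n x = cocycle g B n x)
    (hA : Tendsto (fun n => (((cocycle g A n y)⁻¹ * cocycle g A n x : Rˣ) : R)) atTop (𝓝 HA))
    (hB : Tendsto (fun n => (((cocycle g B n x)⁻¹ * cocycle g B n y : Rˣ) : R)) atTop (𝓝 HB)) :
    Tendsto (fun n => (cocycle g A n y)⁻¹ * cocycle g B n y) atTop (𝓝 (HA * HB)) :=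
  ((Units.tendsto_of_tendsto_val hA).mul (Units.tendsto_of_tendsto_val hB)).congr fun n => by
    rw [hx]
    group

/-- for `y ∈ W(x) = W^s(x) ∩ W^u(x)` (`x` a fixed point), the stable and
unstable holonomy expressions agree: `H^{s,A}_{xy} H^{s,B}_{yx} = H^{u,A}_{xy} H^{u,B}_{yx}`. -/
theorem stmt10 {M : Type*} [MetricSpace M] [CompactSpace M] {d : ℕ}
    (f : M ≃ M) (C₁ lam ε τ : ℝ) (hf : IsHyperbolic f C₁ lam ε τ)
    (x : M) (hx : f x = x)
    (A B : M → GL (Fin d) ℝ)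
    (hA : ∃ K : NNReal, LipschitzWith K fun x => (A x : Matrix (Fin d) (Fin d) ℝ))
    (hB : ∃ K : NNReal, LipschitzWith K fun x => (B x : Matrix (Fin d) (Fin d) ℝ))
    (θ : ℝ) (hθ0 : 0 < θ) (hθ : θ < lam)
    (hFA : FiberBunched (⇑f) A θ) (hFB : FiberBunched (⇑f) B θ)
    (hper : ∀ (p : M) (n : ℕ), 0 < n → (⇑f)^[n] p = p →
      cocycle (⇑f) A n p = cocycle (⇑f) B n p)
    -- the Anosov closing lemma for `f`
    (hclose : ∀ δ : ℝ, 0 < δ → θ + δ < lam → ∃ C₅ > (0 : ℝ), ∃ ε₀ > (0 : ℝ),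
      ∀ (z : M) (n : ℕ), dist ((⇑f)^[n] z) z < ε₀ → ∃ p : M, (⇑f)^[n] p = p ∧
        ∀ j ≤ n, dist ((⇑f)^[j] z) ((⇑f)^[j] p) ≤
          C₅ * Real.exp (-(θ + δ) * (↑(min j (n - j)) : ℝ)) * dist ((⇑f)^[n] z) z)
    -- the stable and unstable holonomies of `A` and `B`
    (HsA HsB HuA HuB : M → M → GL (Fin d) ℝ)
    (hHsA : ∀ w : M, ∀ y ∈ stableSet (⇑f) w, ∀ z ∈ stableSet (⇑f) w,
      Tendsto (fun n : ℕ =>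
          ((((cocycle (⇑f) A n z)⁻¹ * cocycle (⇑f) A n y : GL (Fin d) ℝ)) :
            Matrix (Fin d) (Fin d) ℝ))
        atTop (𝓝 (HsA y z : Matrix (Fin d) (Fin d) ℝ)))
    (hHsB : ∀ w : M, ∀ y ∈ stableSet (⇑f) w, ∀ z ∈ stableSet (⇑f) w,
      Tendsto (fun n : ℕ =>
          ((((cocycle (⇑f) B n z)⁻¹ * cocycle (⇑f) B n y : GL (Fin d) ℝ)) :
            Matrix (Fin d) (Fin d) ℝ))
        atTop (𝓝 (HsB y z : Matrix (Fin d) (Fin d) ℝ)))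
    (hHuA : ∀ w : M, ∀ y ∈ stableSet (⇑f.symm) w, ∀ z ∈ stableSet (⇑f.symm) w,
      Tendsto (fun n : ℕ =>
          ((((zcocycle f A (-(n : ℤ)) z)⁻¹ * zcocycle f A (-(n : ℤ)) y : GL (Fin d) ℝ)) :
            Matrix (Fin d) (Fin d) ℝ))
        atTop (𝓝 (HuA y z : Matrix (Fin d) (Fin d) ℝ)))
    (hHuB : ∀ w : M, ∀ y ∈ stableSet (⇑f.symm) w, ∀ z ∈ stableSet (⇑f.symm) w,
      Tendsto (fun n : ℕ =>
          ((((zcocycle f B (-(n : ℤ)) z)⁻¹ * zcocycle f B (-(n : ℤ)) y : GL (Fin d) ℝ)) :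
            Matrix (Fin d) (Fin d) ℝ))
        atTop (𝓝 (HuB y z : Matrix (Fin d) (Fin d) ℝ))) :
    ∀ y ∈ stableSet (⇑f) x ∩ stableSet (⇑f.symm) x,
      HsA x y * HsB y x = HuA x y * HuB y x := by
  rintro y ⟨hys, hyu⟩
  obtain _ | _ := isEmpty_or_nonempty (Fin d)
  · exact Subsingleton.elim _ _
  have hxs : ∀ n, (⇑f.symm)^[n] x = x := Function.iterate_fixed (f.symm_apply_eq.2 hx.symm)
  have hABx : ∀ n, cocycle f A n x = cocycle f B n x := fun n =>
    n.eq_zero_or_pos.elim (fun h => by rw [h]; rfl) fun h =>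
      hper x n h (Function.iterate_fixed hx n)
  have hS := tendsto_inv_mul_cocycle_of_holonomy hABx (hHsA x x (mem_stableSet_self _ x) y hys)
    (hHsB x y hys x (mem_stableSet_self _ x))
  have hU := tendsto_inv_mul_cocycle_of_holonomy (A := symmGenerator f A) (B := symmGenerator f B)
    (fun n => by rw [cocycle_symm_symmGenerator, cocycle_symm_symmGenerator, hxs, hABx])
    (by simpa only [zcocycle_neg_natCast] using hHuA x x (mem_stableSet_self _ x) y hyu)
    (by simpa only [zcocycle_neg_natCast] using hHuB x y hyu x (mem_stableSet_self _ x))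
  obtain ⟨C₅, hC₅, ε₀, hε₀, hclose⟩ := hclose ((lam - θ) / 2) (by linarith) (by linarith)
  obtain ⟨K, hK, hp⟩ := hf.exists_periodic_shadow_of_homoclinic hclose hC₅.le hε₀ hx hys hyu
  obtain ⟨p, hp⟩ := hp.choice
  have hfwd := hp.mono fun n h => h.2.1
  have hbwd := hp.mono fun n h => h.2.2
  have hκ : θ < θ + (lam - θ) / 2 := by linarith
  obtain ⟨LA, hLA⟩ := hA
  obtain ⟨LB, hLB⟩ := hB
  have hcA := tendsto_cocycle_mul_inv_of_shadowing hLA hFA hθ0.le hθ hκ hK hfwd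
  have hcB := tendsto_cocycle_mul_inv_of_shadowing hLB hFB hθ0.le hθ hκ hK hfwd
  have haA := tendsto_inv_mul_cocycle_of_backward_shadowing f hLA hFA hθ0.le hθ hκ hK hbwd
  have haB := tendsto_inv_mul_cocycle_of_backward_shadowing f hLB hFB hθ0.le hθ hκ hK hbwd
  simp only [iterate_symm_iterate] at haA haB
  refine eq_of_tendsto_mul_mul_inv
    (Γ := fun n => (cocycle f A n ((⇑f.symm)^[n] (p n)))⁻¹ * cocycle f B n ((⇑f.symm)^[n] (p n)))
    (.of_forall fun n => by group) ?_ haA haB hcA hcB hS hU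
  filter_upwards [hp, eventually_gt_atTop 0] with n hn hn0
  rw [cocycle_symm_symmGenerator, cocycle_symm_symmGenerator,
    cocycle_inv_mul_eq_mul_inv_of_periodic f hn.1 (hper _ _ (by omega) hn.1)]
  group

end
end
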